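/- Let δ be a derivation on a ring R. The extension of δ to the symmetric ring of quotients with respect to any hereditary and faithful symmetric torsion theory agrees with the extension of δ to the maximal symmetric ring of quotients Q^σ_max(R). In particular, the extensions of δ to the total symmetric ring of quotients Q^σ_tot(R) and to Q^σ_max(R) agree. -/

import Mathlib

open MulOpposite TensorProduct

/-- A derivation on a ring `S`: an additive map satisfying the Leibniz rule
`δ (a * b) = δ a * b + a * δ b`. -/
def IsDerivation {S : Type*} [Ring S] (δ : S → S) : Prop :=
  (∀ a b : S, δ (a + b) = δ a + δ b) ∧ (∀ a b : S, δ (a * b) = δ a * b + a * δ b)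

/-- A Gabriel filter of left ideals of a ring `S`.  Taking `S = Rᵐᵒᵖ`, this encodes a
Gabriel filter of right ideals of `R`. -/
structure GabrielFilter (S : Type*) [Ring S] where
  sets : Set (Ideal S)
  top_mem : ⊤ ∈ sets
  mono : ∀ ⦃I J : Ideal S⦄, I ∈ sets → I ≤ J → J ∈ sets
  inf_mem : ∀ ⦃I J : Ideal S⦄, I ∈ sets → J ∈ sets → I ⊓ J ∈ sets
  quot_mem : ∀ ⦃I : Ideal S⦄, I ∈ sets → ∀ s : S,
    Submodule.comap (LinearMap.toSpanSingleton S S s) I ∈ sets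
  trans : ∀ ⦃I J : Ideal S⦄, J ∈ sets →
    (∀ s ∈ J, Submodule.comap (LinearMap.toSpanSingleton S S s) I ∈ sets) → I ∈ sets

/-- The torsion set of a module for the torsion theory corresponding to a filter `𝔉` of
ideals: the elements whose annihilator belongs to `𝔉`. -/
def torsionSet {S : Type*} [Ring S] (𝔉 : Set (Ideal S)) (M : Type*) [AddCommGroup M]
    [Module S M] : Set M :=
  {x : M | LinearMap.ker (LinearMap.toSpanSingleton S M x) ∈ 𝔉}

/-- The enveloping ring `R ⊗_ℤ Rᵐᵒᵖ`; an `R`-bimodule is the same thing as a right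
`R ⊗_ℤ Rᵐᵒᵖ`-module, i.e. a left `(R ⊗_ℤ Rᵐᵒᵖ)ᵐᵒᵖ`-module, via `x • (r ⊗ s) = s x r`. -/
abbrev Env (R : Type*) [Ring R] := R ⊗[ℤ] Rᵐᵒᵖ

/-- The left annihilator of an element of an `R`-bimodule, a left ideal of `R`:
`ann_l(x) = {s : R | s • x = 0}`, where the left action of `s` is the action of
`1 ⊗ op s`. -/
def lAnn {R : Type*} [Ring R] (M : Type*) [AddCommGroup M] [Module (Env R)ᵐᵒᵖ M]
    (x : M) : Ideal R where
  carrier := {s : R | op ((1 : R) ⊗ₜ[ℤ] op s) • x = 0}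
  zero_mem' := by simp; first | exact zero_smul (Env R)ᵐᵒᵖ x | exact zero_smul ℤ x | exact zero_smul ℕ x
  add_mem' := by
    intro a b ha hb
    simp only [Set.mem_setOf_eq] at *
    rw [show ((1 : R) ⊗ₜ[ℤ] op (a + b)) = (1 : R) ⊗ₜ[ℤ] op a + (1 : R) ⊗ₜ[ℤ] op b by
        rw [op_add, TensorProduct.tmul_add],
      op_add, add_smul, ha, hb, add_zero]
  smul_mem' := by
    intro c s hs
    simp only [Set.mem_setOf_eq, smul_eq_mul] at *
    rw [show ((1 : R) ⊗ₜ[ℤ] op (c * s)) = ((1 : R) ⊗ₜ[ℤ] op s) * ((1 : R) ⊗ₜ[ℤ] op c) by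
        rw [Algebra.TensorProduct.tmul_mul_tmul, one_mul, ← op_mul],
      op_mul, mul_smul, hs, smul_zero]

/-- The right annihilator of an element of an `R`-bimodule, a right ideal of `R`
(encoded as a left ideal of `Rᵐᵒᵖ`): `ann_r(x) = {r | x • r = 0}`, where the right
action of `r` is the action of `r ⊗ 1`. -/
def rAnn {R : Type*} [Ring R] (M : Type*) [AddCommGroup M] [Module (Env R)ᵐᵒᵖ M]
    (x : M) : Ideal Rᵐᵒᵖ where
  carrier := {j : Rᵐᵒᵖ | op (unop j ⊗ₜ[ℤ] (1 : Rᵐᵒᵖ)) • x = 0}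
  zero_mem' := by simp; first | exact zero_smul (Env R)ᵐᵒᵖ x | exact zero_smul ℤ x | exact zero_smul ℕ x
  add_mem' := by
    intro a b ha hb
    simp only [Set.mem_setOf_eq] at *
    rw [show (unop (a + b) ⊗ₜ[ℤ] (1 : Rᵐᵒᵖ)) =
          unop a ⊗ₜ[ℤ] (1 : Rᵐᵒᵖ) + unop b ⊗ₜ[ℤ] (1 : Rᵐᵒᵖ) by
        rw [unop_add, TensorProduct.add_tmul],
      op_add, add_smul, ha, hb, add_zero]
  smul_mem' := by
    intro c j hj
    simp only [Set.mem_setOf_eq, smul_eq_mul] at *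
    rw [show (unop (c * j) ⊗ₜ[ℤ] (1 : Rᵐᵒᵖ)) =
          (unop j ⊗ₜ[ℤ] (1 : Rᵐᵒᵖ)) * (unop c ⊗ₜ[ℤ] (1 : Rᵐᵒᵖ)) by
        rw [Algebra.TensorProduct.tmul_mul_tmul, one_mul, unop_mul],
      op_mul, mul_smul, hj, smul_zero]

/-- The symmetric annihilator of an element of a bimodule: the right ideal
`{t ∈ R ⊗_ℤ Rᵐᵒᵖ | x t = 0}`. -/
def symAnn {R : Type*} [Ring R] (M : Type*) [AddCommGroup M] [Module (Env R)ᵐᵒᵖ M]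
    (x : M) : Ideal (Env R)ᵐᵒᵖ :=
  LinearMap.ker (LinearMap.toSpanSingleton (Env R)ᵐᵒᵖ M x)

/-- The right ideal `J ⊗ Rᵐᵒᵖ + R ⊗ I` of `R ⊗_ℤ Rᵐᵒᵖ` generated by a left ideal `I`
and a right ideal `J` of `R`. -/
def symGen {R : Type*} [Ring R] (I : Ideal R) (J : Ideal Rᵐᵒᵖ) : Ideal (Env R)ᵐᵒᵖ :=
  Ideal.span ((fun j : Rᵐᵒᵖ => op (unop j ⊗ₜ[ℤ] (1 : Rᵐᵒᵖ))) '' (J : Set Rᵐᵒᵖ) ∪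
    (fun i : R => op ((1 : R) ⊗ₜ[ℤ] op i)) '' (I : Set R))

/-- The symmetric Gabriel filter induced by a left Gabriel filter `Fl` and a right
Gabriel filter `Fr`: the right ideals of `R ⊗_ℤ Rᵐᵒᵖ` containing `J ⊗ Rᵐᵒᵖ + R ⊗ I` for
some `I ∈ Fl` and `J ∈ Fr`. -/
def symSets {R : Type*} [Ring R] (Fl : GabrielFilter R) (Fr : GabrielFilter Rᵐᵒᵖ) :
    Set (Ideal (Env R)ᵐᵒᵖ) :=
  {K | ∃ I ∈ Fl.sets, ∃ J ∈ Fr.sets, symGen I J ≤ K}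

/-- The torsion submodule of a bimodule for the symmetric torsion theory induced by `Fl`
and `Fr`: `ₗt_r(M) = t_l(M) ∩ t_r(M)`. -/
def symTorsion {R : Type*} [Ring R] (Fl : GabrielFilter R) (Fr : GabrielFilter Rᵐᵒᵖ)
    (M : Type*) [AddCommGroup M] [Module (Env R)ᵐᵒᵖ M] : Set M :=
  {x : M | lAnn M x ∈ Fl.sets} ∩ {x : M | rAnn M x ∈ Fr.sets}

/-- `δ'` is the derivation induced on `R ⊗_ℤ Rᵐᵒᵖ` by the derivation `δ` on `R`:
`δ̄(r ⊗ s) = δ r ⊗ s + r ⊗ δ s`. -/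
def IsInducedDerivation {R : Type*} [Ring R] (δ : R → R) (δ' : Env R → Env R) : Prop :=
  (∀ a b : Env R, δ' (a + b) = δ' a + δ' b) ∧
    ∀ r s : R, δ' (r ⊗ₜ[ℤ] op s) = δ r ⊗ₜ[ℤ] op s + r ⊗ₜ[ℤ] op (δ s)

/-- `d` is a `δ`-derivation on the `R`-bimodule `M`: `d` is additive,
`d (x r) = (d x) r + x (δ r)` and `d (s x) = (δ s) x + s (d x)`. -/
def IsBimodDerivation {R : Type*} [Ring R] (δ : R → R) {M : Type*} [AddCommGroup M]
    [Module (Env R)ᵐᵒᵖ M] (d : M → M) : Prop :=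
  (∀ x y : M, d (x + y) = d x + d y) ∧
  (∀ (x : M) (r : R),
    d (op (r ⊗ₜ[ℤ] (1 : Rᵐᵒᵖ)) • x) =
      op (r ⊗ₜ[ℤ] (1 : Rᵐᵒᵖ)) • d x + op (δ r ⊗ₜ[ℤ] (1 : Rᵐᵒᵖ)) • x) ∧
  (∀ (x : M) (s : R),
    d (op ((1 : R) ⊗ₜ[ℤ] op s) • x) =
      op ((1 : R) ⊗ₜ[ℤ] op (δ s)) • x + op ((1 : R) ⊗ₜ[ℤ] op s) • d x)

/-- The symmetric filter induced by `Fl` and `Fr` is differential: for every `I` in the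
filter there is `K` in the filter with `δ̄(K) ⊆ I` for all derivations `δ` on `R`. -/
def IsSymDifferential {R : Type*} [Ring R] (Fl : GabrielFilter R)
    (Fr : GabrielFilter Rᵐᵒᵖ) : Prop :=
  ∀ I ∈ symSets Fl Fr, ∃ K ∈ symSets Fl Fr, ∀ δ : R → R, IsDerivation δ →
    ∀ δ' : Env R → Env R, IsInducedDerivation δ δ' →
      ∀ t : (Env R)ᵐᵒᵖ, t ∈ K → op (δ' (unop t)) ∈ I

/-- `q : M → Q` realizes `Q` as the symmetric module of quotients of the bimodule `M`
with respect to the symmetric filter induced by `Fl` and `Fr`: the kernel of `q` is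
`ₗt_r(M)`, `Q` is torsion free, the cokernel of `q` is torsion, and `Q` is closed. -/
structure IsSymModuleOfQuotients {R : Type*} [Ring R] (Fl : GabrielFilter R)
    (Fr : GabrielFilter Rᵐᵒᵖ) {M Q : Type*} [AddCommGroup M] [Module (Env R)ᵐᵒᵖ M]
    [AddCommGroup Q] [Module (Env R)ᵐᵒᵖ Q] (q : M →ₗ[(Env R)ᵐᵒᵖ] Q) : Prop where
  ker_eq : (LinearMap.ker q : Set M) = symTorsion Fl Fr M
  torsionFree : symTorsion Fl Fr Q = {0}
  coker_torsion : ∀ y : Q,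
    Submodule.comap (LinearMap.toSpanSingleton (Env R)ᵐᵒᵖ Q y) (LinearMap.range q) ∈
      symSets Fl Fr
  closed : ∀ K ∈ symSets Fl Fr, ∀ f : ↥K →ₗ[(Env R)ᵐᵒᵖ] Q,
    ∃ g : (Env R)ᵐᵒᵖ →ₗ[(Env R)ᵐᵒᵖ] Q, ∀ t : ↥K, g ↑t = f t

universe u

/-- `q : R → Q` realizes the ring `Q` as the symmetric ring of quotients of `R` with
respect to the symmetric filter induced by `Fl` and `Fr`: the bimodule structure of `Q`
comes from its ring structure via `q`, and `q` is a ring homomorphism which realizes `Q`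
as the symmetric module of quotients of the bimodule `R`. -/
structure IsSymRingOfQuotients {R : Type*} [Ring R] [Module (Env R)ᵐᵒᵖ R]
    (Fl : GabrielFilter R) (Fr : GabrielFilter Rᵐᵒᵖ) {Q : Type*} [Ring Q]
    [Module (Env R)ᵐᵒᵖ Q] (q : R →ₗ[(Env R)ᵐᵒᵖ] Q) : Prop where
  smul_def : ∀ (r s : R) (y : Q), op (r ⊗ₜ[ℤ] op s) • y = q s * y * q r
  map_mul : ∀ a b : R, q (a * b) = q a * q b
  map_one : q 1 = 1
  quotients : IsSymModuleOfQuotients Fl Fr q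

/-- Data exhibiting the symmetric filter induced by `Fl` and `Fr` as a perfect symmetric
filter: a ring `S` which is the symmetric ring of quotients of `R` with respect to the
filter via `f : R → S`, where `Fl` is exactly the family of left ideals `I` with
`S f(I) = S` and `Fr` is exactly the family of right ideals `J` with `f(J) S = S`. -/
structure PerfectSymRingData (R : Type u) [Ring R] [Module (Env R)ᵐᵒᵖ R]
    (Fl : GabrielFilter R) (Fr : GabrielFilter Rᵐᵒᵖ) : Type (u + 1) where
  S : Type u
  [ringS : Ring S]
  [modS : Module (Env R)ᵐᵒᵖ S]
  f : R →ₗ[(Env R)ᵐᵒᵖ] S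
  left_eq : Fl.sets = {I : Ideal R | Ideal.span (⇑f '' (I : Set R)) = ⊤}
  right_eq : Fr.sets =
    {J : Ideal Rᵐᵒᵖ |
      Submodule.span Sᵐᵒᵖ ((fun j : Rᵐᵒᵖ => f (unop j)) '' (J : Set Rᵐᵒᵖ)) = ⊤}
  isSROQ : IsSymRingOfQuotients Fl Fr f

/-- The symmetric filter induced by `Fl` and `Fr` is perfect. -/
def IsPerfectSymFilter (R : Type u) [Ring R] [Module (Env R)ᵐᵒᵖ R]
    (Fl : GabrielFilter R) (Fr : GabrielFilter Rᵐᵒᵖ) : Prop :=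
  Nonempty (PerfectSymRingData R Fl Fr)

/-- A left ideal of `R` is dense if for all `x y : R` with `x ≠ 0` there is `r : R` with
`r * y ∈ I` and `r * x ≠ 0`. -/
def IsDenseLeftIdeal {R : Type*} [Ring R] (I : Ideal R) : Prop :=
  ∀ x y : R, x ≠ 0 → ∃ r : R, r * y ∈ I ∧ r * x ≠ 0

/-- A right ideal of `R` (a left ideal of `Rᵐᵒᵖ`) is dense if for all `x y : R` with
`x ≠ 0` there is `r : R` with `y * r ∈ I` and `x * r ≠ 0`. -/
def IsDenseRightIdeal {R : Type*} [Ring R] (I : Ideal Rᵐᵒᵖ) : Prop :=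
  ∀ x y : R, x ≠ 0 → ∃ r : R, op r * op y ∈ I ∧ x * r ≠ 0

/-!
A `δ`-derivation `d` of a torsion-free bimodule `M` extends uniquely to its symmetric module
of quotients `q : M → Q`. For `y ∈ Q` the Leibniz rule forces `(D y) t = q (d x) - y δ̄(t)`
whenever `y t = q x`; the right-hand side is linear in `t` on the denominator ideal of `y`,
which lies in the filter, so closedness of `Q` provides `D y`, and torsion-freeness of `Q`
makes it unique. On a ring of quotients this extension is a derivation: for the Leibniz rule
the iterated denominator ideals stay in the filter because it is hereditary.

The dense filter is faithful, so `q_max` is injective, hence so is any bimodule map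
`Q → Q^σ_max(R)` over `R`; such a map carries the defining identities of the extension on `Q`
to those on `Q^σ_max(R)`, and uniqueness there gives agreement. A total ring of quotients
embeds in `Q^σ_max(R)` in this way, so its filter is faithful and it is a special case.
-/

namespace IsDerivation

variable {R : Type*} [Ring R] {δ : R → R}

theorem map_zero (hδ : IsDerivation δ) : δ 0 = 0 := by
  simpa using (hδ.1 0 0).symm

theorem map_one (hδ : IsDerivation δ) : δ 1 = 0 := by
  simpa using hδ.2 1 1

/-- The derivation `δ̄` of `R ⊗ Rᵐᵒᵖ` induced by `δ`. -/
noncomputable def toEnv (hδ : IsDerivation δ) : Env R →ₗ[ℤ] Env R :=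
  TensorProduct.map (AddMonoidHom.mk' δ hδ.1).toIntLinearMap LinearMap.id +
    TensorProduct.map LinearMap.id (AddMonoidHom.mulOp (AddMonoidHom.mk' δ hδ.1)).toIntLinearMap

theorem toEnv_tmul (hδ : IsDerivation δ) (r : R) (s : Rᵐᵒᵖ) :
    hδ.toEnv (r ⊗ₜ[ℤ] s) = δ r ⊗ₜ[ℤ] s + r ⊗ₜ[ℤ] op (δ (unop s)) :=
  rfl

theorem toEnv_one_tmul (hδ : IsDerivation δ) (s : R) :
    hδ.toEnv ((1 : R) ⊗ₜ[ℤ] op s) = (1 : R) ⊗ₜ[ℤ] op (δ s) := by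
  rw [toEnv_tmul, hδ.map_one, zero_tmul, zero_add, unop_op]

theorem toEnv_tmul_one (hδ : IsDerivation δ) (r : R) :
    hδ.toEnv (r ⊗ₜ[ℤ] (1 : Rᵐᵒᵖ)) = δ r ⊗ₜ[ℤ] (1 : Rᵐᵒᵖ) := by
  rw [toEnv_tmul, unop_one, hδ.map_one, op_zero, tmul_zero, add_zero]

theorem toEnv_mul (hδ : IsDerivation δ) (a b : Env R) :
    hδ.toEnv (a * b) = hδ.toEnv a * b + a * hδ.toEnv b := by
  induction a using TensorProduct.induction_on with
  | zero => simp
  | add a₁ a₂ h₁ h₂ =>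
    simp only [add_mul, map_add, h₁, h₂]
    abel
  | tmul r s =>
    induction b using TensorProduct.induction_on with
    | zero => simp
    | add b₁ b₂ h₁ h₂ =>
      simp only [mul_add, map_add, h₁, h₂]
      abel
    | tmul r' s' =>
      simp only [Algebra.TensorProduct.tmul_mul_tmul, toEnv_tmul, hδ.2, unop_mul, op_add,
        op_mul, op_unop, tmul_add, add_tmul, add_mul, mul_add]
      abel

end IsDerivation

section BimodDerivation

variable {R : Type*} [Ring R] {δ : R → R} {M : Type*} [AddCommGroup M]
  [Module (Env R)ᵐᵒᵖ M] {d : M → M}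

theorem IsBimodDerivation.map_zero (hd : IsBimodDerivation δ d) : d 0 = 0 := by
  simpa using (hd.1 0 0).symm

theorem IsBimodDerivation.map_op_smul (hδ : IsDerivation δ) (hd : IsBimodDerivation δ d)
    (u : Env R) (x : M) : d (op u • x) = op u • d x + op (hδ.toEnv u) • x := by
  induction u using TensorProduct.induction_on with
  | zero =>
    rw [_root_.map_zero hδ.toEnv, op_zero, zero_smul (Env R)ᵐᵒᵖ x, zero_smul (Env R)ᵐᵒᵖ (d x),
      hd.map_zero, add_zero]
  | add a b ha hb =>
    simp only [op_add, add_smul, hd.1, ha, hb, map_add]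
    abel
  | tmul r s =>
    obtain ⟨s, rfl⟩ := op_surjective s
    have hsplit : ∀ a b : R,
        op (a ⊗ₜ[ℤ] op b) = op ((1 : R) ⊗ₜ[ℤ] op b) * op (a ⊗ₜ[ℤ] (1 : Rᵐᵒᵖ)) := fun a b => by
      rw [← op_mul, Algebra.TensorProduct.tmul_mul_tmul, mul_one, one_mul]
    rw [hsplit, mul_smul, hd.2.2, hd.2.1, hδ.toEnv_tmul, unop_op, smul_add, ← mul_smul,
      ← mul_smul, ← mul_smul, ← hsplit, ← hsplit, ← hsplit, op_add, add_smul]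
    abel

end BimodDerivation

theorem IsDerivation.isBimodDerivation {R : Type*} [Ring R] [Module (Env R)ᵐᵒᵖ R]
    (hR : ∀ r s x : R, op (r ⊗ₜ[ℤ] op s) • x = s * x * r) {δ : R → R}
    (hδ : IsDerivation δ) : IsBimodDerivation δ δ := by
  refine ⟨hδ.1, fun x r => ?_, fun x s => ?_⟩
  · simp only [← op_one, hR, one_mul, hδ.2]
  · simp only [hR, mul_one, hδ.2]

section SymFilter

variable {R : Type*} [Ring R] {Fl : GabrielFilter R} {Fr : GabrielFilter Rᵐᵒᵖ}

theorem symGen_mono {I I' : Ideal R} {J J' : Ideal Rᵐᵒᵖ} (hI : I ≤ I') (hJ : J ≤ J') :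
    symGen I J ≤ symGen I' J' :=
  Ideal.span_mono (Set.union_subset_union (Set.image_mono hJ) (Set.image_mono hI))

theorem one_tmul_mem_symGen {I : Ideal R} (J : Ideal Rᵐᵒᵖ) {i : R} (hi : i ∈ I) :
    op ((1 : R) ⊗ₜ[ℤ] op i) ∈ symGen I J :=
  Ideal.subset_span (Or.inr ⟨i, hi, rfl⟩)

theorem tmul_one_mem_symGen (I : Ideal R) {J : Ideal Rᵐᵒᵖ} {j : Rᵐᵒᵖ} (hj : j ∈ J) :
    op (unop j ⊗ₜ[ℤ] (1 : Rᵐᵒᵖ)) ∈ symGen I J :=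
  Ideal.subset_span (Or.inl ⟨j, hj, rfl⟩)

theorem inf_mem_symSets {K K' : Ideal (Env R)ᵐᵒᵖ} (hK : K ∈ symSets Fl Fr)
    (hK' : K' ∈ symSets Fl Fr) : K ⊓ K' ∈ symSets Fl Fr := by
  obtain ⟨I, hI, J, hJ, hle⟩ := hK
  obtain ⟨I', hI', J', hJ', hle'⟩ := hK'
  exact ⟨I ⊓ I', Fl.inf_mem hI hI', J ⊓ J', Fr.inf_mem hJ hJ',
    le_inf ((symGen_mono inf_le_left inf_le_left).trans hle)
      ((symGen_mono inf_le_right inf_le_right).trans hle')⟩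

variable {M : Type*} [AddCommGroup M] [Module (Env R)ᵐᵒᵖ M]

theorem zero_mem_symTorsion : (0 : M) ∈ symTorsion Fl Fr M :=
  ⟨Fl.mono Fl.top_mem fun _ _ => smul_zero _, Fr.mono Fr.top_mem fun _ _ => smul_zero _⟩

theorem eq_zero_of_forall_smul_eq_zero (htf : symTorsion Fl Fr M = {0}) {w : M}
    {K : Ideal (Env R)ᵐᵒᵖ} (hK : K ∈ symSets Fl Fr) (h : ∀ t ∈ K, t • w = 0) : w = 0 := by
  obtain ⟨I, hI, J, hJ, hle⟩ := hK
  have hw : w ∈ symTorsion Fl Fr M :=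
    ⟨Fl.mono hI fun i hi => h _ (hle (one_tmul_mem_symGen J hi)),
      Fr.mono hJ fun j hj => h _ (hle (tmul_one_mem_symGen I hj))⟩
  rwa [htf] at hw

theorem symTorsion_self_eq_zero [Module (Env R)ᵐᵒᵖ R]
    (hR : ∀ r s x : R, op (r ⊗ₜ[ℤ] op s) • x = s * x * r)
    (hFl : ∀ I ∈ Fl.sets, IsDenseLeftIdeal I) : symTorsion Fl Fr R = {0} := by
  refine Set.eq_singleton_iff_unique_mem.2 ⟨zero_mem_symTorsion, fun x hx => ?_⟩
  by_contra hx0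
  obtain ⟨r, hr, hrx⟩ := hFl _ hx.1 x 1 hx0
  have hr' : op ((1 : R) ⊗ₜ[ℤ] op (r * 1)) • x = 0 := hr
  rw [hR, mul_one, mul_one] at hr'
  exact hrx hr'

end SymFilter

section ModuleOfQuotients

variable {R : Type*} [Ring R] {δ : R → R} (hδ : IsDerivation δ)
  {Fl : GabrielFilter R} {Fr : GabrielFilter Rᵐᵒᵖ}
  {M Q : Type*} [AddCommGroup M] [Module (Env R)ᵐᵒᵖ M] [AddCommGroup Q] [Module (Env R)ᵐᵒᵖ Q]

/-- `z` is a possible value at `y` of an extension `D` of `d` along `q`: it obeys the Leibniz rule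
`D (y t) = (D y) t + y δ̄(t)` for every `t` in the denominator ideal of `y`. -/
def IsDerivValue (d : M → M) (q : M →ₗ[(Env R)ᵐᵒᵖ] Q) (y z : Q) : Prop :=
  ∀ (t : (Env R)ᵐᵒᵖ) (x : M), t • y = q x → t • z = q (d x) - op (hδ.toEnv (unop t)) • y

variable {hδ} {d : M → M} {q : M →ₗ[(Env R)ᵐᵒᵖ] Q}

theorem IsSymModuleOfQuotients.injective_iff (hq : IsSymModuleOfQuotients Fl Fr q) :
    Function.Injective q ↔ symTorsion Fl Fr M = {0} := by
  rw [← hq.ker_eq, ← LinearMap.ker_eq_bot, ← Submodule.bot_coe (R := (Env R)ᵐᵒᵖ),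
    SetLike.coe_set_eq]

theorem IsSymModuleOfQuotients.injective_of_injective_comp
    (hq : IsSymModuleOfQuotients Fl Fr q) {Q' : Type*} [AddCommGroup Q']
    [Module (Env R)ᵐᵒᵖ Q'] {f : Q →ₗ[(Env R)ᵐᵒᵖ] Q'} (hf : Function.Injective (f ∘ q)) :
    Function.Injective f := by
  refine (injective_iff_map_eq_zero f).2 fun v hv =>
    eq_zero_of_forall_smul_eq_zero hq.torsionFree (hq.coker_torsion v) ?_
  rintro t ⟨x, hx⟩
  have hx0 : x = 0 := hf (by simp [hx, hv])
  rw [← LinearMap.toSpanSingleton_apply, ← hx, hx0, map_zero]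

theorem IsDerivValue.eq (hq : IsSymModuleOfQuotients Fl Fr q) {y z z' : Q}
    (h : IsDerivValue hδ d q y z) (h' : IsDerivValue hδ d q y z') : z = z' :=
  sub_eq_zero.1 <| eq_zero_of_forall_smul_eq_zero hq.torsionFree (hq.coker_torsion y)
    fun t ⟨x, hx⟩ => by rw [smul_sub, h t x hx.symm, h' t x hx.symm, sub_self]

theorem IsDerivValue.map {Q' : Type*} [AddCommGroup Q'] [Module (Env R)ᵐᵒᵖ Q']
    {f : Q →ₗ[(Env R)ᵐᵒᵖ] Q'} (hf : Function.Injective f) {q' : M →ₗ[(Env R)ᵐᵒᵖ] Q'}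
    (hfq : ∀ x, f (q x) = q' x) {y z : Q} (h : IsDerivValue hδ d q y z) :
    IsDerivValue hδ d q' (f y) (f z) := by
  intro t x htx
  have hty : t • y = q x := hf (by rw [map_smul, htx, hfq])
  rw [← map_smul, h t x hty, map_sub, map_smul, hfq]

theorem IsBimodDerivation.isDerivValue_apply (hd : IsBimodDerivation δ d)
    (hinj : Function.Injective q) (x : M) : IsDerivValue hδ d q (q x) (q (d x)) := by
  intro t x' htx
  obtain rfl : x' = t • x := hinj (by rw [← htx, map_smul])
  have hdt := hd.map_op_smul hδ (unop t) x
  rw [op_unop] at hdt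
  rw [hdt, map_add, map_smul, map_smul, add_sub_cancel_right]

theorem IsDerivValue.add (hq : IsSymModuleOfQuotients Fl Fr q) (hd : IsBimodDerivation δ d)
    {y y' z z' z'' : Q} (h : IsDerivValue hδ d q y z) (h' : IsDerivValue hδ d q y' z')
    (h'' : IsDerivValue hδ d q (y + y') z'') : z'' = z + z' := by
  refine sub_eq_zero.1 <| eq_zero_of_forall_smul_eq_zero hq.torsionFree
    (inf_mem_symSets (hq.coker_torsion y) (hq.coker_torsion y')) ?_
  rintro t ⟨⟨x, hx⟩, ⟨x', hx'⟩⟩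
  have hsum : t • (y + y') = q (x + x') := by
    rw [smul_add, map_add, hx, hx']
    rfl
  rw [smul_sub, smul_add, h'' t _ hsum, h t x hx.symm, h' t x' hx'.symm, hd.1, map_add,
    smul_add]
  abel

theorem IsSymModuleOfQuotients.exists_isDerivValue (hq : IsSymModuleOfQuotients Fl Fr q)
    (hd : IsBimodDerivation δ d) (hinj : Function.Injective q) (y : Q) :
    ∃ z, IsDerivValue hδ d q y z := by
  set K := Submodule.comap (LinearMap.toSpanSingleton (Env R)ᵐᵒᵖ Q y) (LinearMap.range q)
  choose xf hxf using fun t : K => t.2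
  have hxf : ∀ t : K, q (xf t) = (t : (Env R)ᵐᵒᵖ) • y := hxf
  let f : K →ₗ[(Env R)ᵐᵒᵖ] Q :=
    { toFun := fun t => q (d (xf t)) - op (hδ.toEnv (unop (t : (Env R)ᵐᵒᵖ))) • y
      map_add' := fun t t' => by
        have e : xf (t + t') = xf t + xf t' :=
          hinj (by rw [map_add, hxf, hxf, hxf, Submodule.coe_add, add_smul])
        rw [e, hd.1, map_add, Submodule.coe_add, unop_add, map_add, op_add, add_smul]
        abel
      map_smul' := fun c t => by
        have e : xf (c • t) = c • xf t :=
          hinj (by rw [map_smul, hxf, hxf, Submodule.coe_smul, smul_eq_mul, mul_smul])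
        have hdc := hd.map_op_smul hδ (unop c) (xf t)
        rw [op_unop] at hdc
        dsimp only [RingHom.id_apply]
        rw [e, hdc, Submodule.coe_smul, smul_eq_mul, unop_mul, hδ.toEnv_mul, op_add, op_mul,
          op_mul, op_unop, op_unop, add_smul, mul_smul, mul_smul, map_add, map_smul, map_smul,
          hxf, smul_sub]
        abel }
  obtain ⟨g, hg⟩ := hq.closed K (hq.coker_torsion y) f
  refine ⟨g 1, fun t x htx => ?_⟩
  have htK : t ∈ K := ⟨x, htx.symm⟩
  have hx : xf ⟨t, htK⟩ = x := hinj (by rw [hxf, htx])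
  rw [← map_smul, smul_eq_mul, mul_one, hg ⟨t, htK⟩]
  show q (d (xf _)) - _ = _
  rw [hx]

end ModuleOfQuotients

section RingOfQuotients

variable {R : Type*} [Ring R] [Module (Env R)ᵐᵒᵖ R] {δ : R → R}
  {Fl : GabrielFilter R} {Fr : GabrielFilter Rᵐᵒᵖ}
  {Q : Type*} [Ring Q] [Module (Env R)ᵐᵒᵖ Q] {q : R →ₗ[(Env R)ᵐᵒᵖ] Q}

theorem IsSymRingOfQuotients.one_tmul_smul (hq : IsSymRingOfQuotients Fl Fr q) (s : R)
    (v : Q) : op ((1 : R) ⊗ₜ[ℤ] op s) • v = q s * v := by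
  rw [hq.smul_def, hq.map_one, mul_one]

theorem IsSymRingOfQuotients.tmul_one_smul (hq : IsSymRingOfQuotients Fl Fr q) (r : R)
    (v : Q) : op (r ⊗ₜ[ℤ] (1 : Rᵐᵒᵖ)) • v = v * q r := by
  rw [← op_one, hq.smul_def, hq.map_one, one_mul]

theorem IsDerivValue.mul_left {hδ : IsDerivation δ} (hq : IsSymRingOfQuotients Fl Fr q)
    {y z : Q} (h : IsDerivValue hδ δ q y z) {i a : R} (hia : q i * y = q a) :
    q i * z = q (δ a) - q (δ i) * y := by
  have h1 := h (op ((1 : R) ⊗ₜ[ℤ] op i)) a (by rw [hq.one_tmul_smul, hia])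
  rwa [unop_op, hδ.toEnv_one_tmul, hq.one_tmul_smul, hq.one_tmul_smul] at h1

theorem IsDerivValue.mul_right {hδ : IsDerivation δ} (hq : IsSymRingOfQuotients Fl Fr q)
    {y z : Q} (h : IsDerivValue hδ δ q y z) {j b : R} (hjb : y * q j = q b) :
    z * q j = q (δ b) - y * q (δ j) := by
  have h1 := h (op (j ⊗ₜ[ℤ] (1 : Rᵐᵒᵖ))) b (by rw [hq.tmul_one_smul, hjb])
  rwa [unop_op, hδ.toEnv_tmul_one, hq.tmul_one_smul, hq.tmul_one_smul] at h1

def leftDenIdeal (q : R →ₗ[(Env R)ᵐᵒᵖ] Q) (hmul : ∀ a b : R, q (a * b) = q a * q b)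
    (v : Q) (W : Ideal R) : Ideal R where
  carrier := {r : R | ∃ x ∈ W, q x = q r * v}
  zero_mem' := ⟨0, W.zero_mem, by simp⟩
  add_mem' := by
    rintro a b ⟨x, hxW, hx⟩ ⟨x', hxW', hx'⟩
    exact ⟨x + x', W.add_mem hxW hxW', by rw [map_add, map_add, hx, hx', add_mul]⟩
  smul_mem' := by
    rintro c r ⟨x, hxW, hx⟩
    exact ⟨c * x, W.mul_mem_left c hxW, by rw [smul_eq_mul, hmul, hmul, mul_assoc, hx]⟩

def rightDenIdeal (q : R →ₗ[(Env R)ᵐᵒᵖ] Q) (hmul : ∀ a b : R, q (a * b) = q a * q b)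
    (v : Q) (W : Ideal Rᵐᵒᵖ) : Ideal Rᵐᵒᵖ where
  carrier := {j : Rᵐᵒᵖ | ∃ b ∈ W, q (unop b) = v * q (unop j)}
  zero_mem' := ⟨0, W.zero_mem, by simp⟩
  add_mem' := by
    rintro a b ⟨x, hxW, hx⟩ ⟨x', hxW', hx'⟩
    exact ⟨x + x', W.add_mem hxW hxW', by rw [unop_add, unop_add, map_add, map_add, hx, hx',
      mul_add]⟩
  smul_mem' := by
    rintro c j ⟨b, hbW, hb⟩
    exact ⟨c * b, W.mul_mem_left c hbW, by
      rw [smul_eq_mul, unop_mul, unop_mul, hmul, hmul, hb, mul_assoc]⟩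

theorem leftDenIdeal_top_mem (hq : IsSymRingOfQuotients Fl Fr q) (v : Q) :
    leftDenIdeal q hq.map_mul v ⊤ ∈ Fl.sets := by
  obtain ⟨I, hI, J, -, hle⟩ := hq.quotients.coker_torsion v
  refine Fl.mono hI fun i hi => ?_
  obtain ⟨x, hx⟩ := hle (one_tmul_mem_symGen J hi)
  exact ⟨x, trivial, hx.trans (hq.one_tmul_smul i v)⟩

theorem rightDenIdeal_top_mem (hq : IsSymRingOfQuotients Fl Fr q) (v : Q) :
    rightDenIdeal q hq.map_mul v ⊤ ∈ Fr.sets := by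
  obtain ⟨I, -, J, hJ, hle⟩ := hq.quotients.coker_torsion v
  refine Fr.mono hJ fun j hj => ?_
  obtain ⟨x, hx⟩ := hle (tmul_one_mem_symGen I hj)
  exact ⟨op x, trivial, hx.trans (hq.tmul_one_smul (unop j) v)⟩

theorem leftDenIdeal_mem (hq : IsSymRingOfQuotients Fl Fr q) (v : Q) {W : Ideal R}
    (hW : W ∈ Fl.sets) : leftDenIdeal q hq.map_mul v W ∈ Fl.sets := by
  refine Fl.trans (leftDenIdeal_top_mem hq v) ?_
  rintro s ⟨x, -, hx⟩
  refine Fl.mono (Fl.quot_mem hW x) fun r hr => ⟨r * x, hr, ?_⟩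
  show q (r * x) = q (r * s) * v
  rw [hq.map_mul, hq.map_mul, hx, mul_assoc]

theorem rightDenIdeal_mem (hq : IsSymRingOfQuotients Fl Fr q) (v : Q) {W : Ideal Rᵐᵒᵖ}
    (hW : W ∈ Fr.sets) : rightDenIdeal q hq.map_mul v W ∈ Fr.sets := by
  refine Fr.trans (rightDenIdeal_top_mem hq v) ?_
  rintro s ⟨b, -, hb⟩
  refine Fr.mono (Fr.quot_mem hW b) fun r hr => ⟨r * b, hr, ?_⟩
  show q (unop (r * b)) = v * q (unop (r * s))
  rw [unop_mul, unop_mul, hq.map_mul, hq.map_mul, hb, mul_assoc]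

theorem IsDerivValue.mul {hδ : IsDerivation δ} (hq : IsSymRingOfQuotients Fl Fr q)
    {y y' z z' z'' : Q} (h : IsDerivValue hδ δ q y z) (h' : IsDerivValue hδ δ q y' z')
    (h'' : IsDerivValue hδ δ q (y * y') z'') : z'' = z * y' + y * z' := by
  have hw : z'' - (z * y' + y * z') ∈ symTorsion Fl Fr Q := by
    refine ⟨Fl.mono (leftDenIdeal_mem hq y (leftDenIdeal_top_mem hq y')) ?_,
      Fr.mono (rightDenIdeal_mem hq y' (rightDenIdeal_top_mem hq y)) ?_⟩
    · rintro i ⟨a, ⟨c, -, hc⟩, ha⟩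
      show op ((1 : R) ⊗ₜ[ℤ] op i) • _ = 0
      rw [hq.one_tmul_smul, mul_sub, mul_add, ← mul_assoc, ← mul_assoc,
        h''.mul_left hq (by rw [← mul_assoc, ← ha, ← hc]), h.mul_left hq ha.symm, ← ha,
        h'.mul_left hq hc.symm]
      noncomm_ring
    · rintro j ⟨b, ⟨c, -, hc⟩, hb⟩
      show op (unop j ⊗ₜ[ℤ] (1 : Rᵐᵒᵖ)) • _ = 0
      rw [hq.tmul_one_smul, sub_mul, add_mul, mul_assoc, mul_assoc,
        h''.mul_right hq (by rw [mul_assoc, ← hb, ← hc]), h'.mul_right hq hb.symm, ← hb,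
        h.mul_right hq hc.symm]
      noncomm_ring
  rw [hq.quotients.torsionFree] at hw
  exact sub_eq_zero.1 hw

theorem IsSymRingOfQuotients.exists_derivation_extension
    (hR : ∀ r s x : R, op (r ⊗ₜ[ℤ] op s) • x = s * x * r) (hδ : IsDerivation δ)
    (hfaith : symTorsion Fl Fr R = {0}) (hq : IsSymRingOfQuotients Fl Fr q) :
    ∃ D : Q → Q, IsDerivation D ∧ (∀ r, D (q r) = q (δ r)) ∧
      ∀ y, IsDerivValue hδ δ q y (D y) := by
  have hd := hδ.isBimodDerivation hR
  have hinj := hq.quotients.injective_iff.2 hfaith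
  choose D hD using hq.quotients.exists_isDerivValue (hδ := hδ) hd hinj
  exact ⟨D, ⟨fun y y' => (hD y).add hq.quotients hd (hD y') (hD _),
      fun y y' => (hD y).mul hq (hD y') (hD _)⟩,
    fun r => (hD _).eq hq.quotients (hd.isDerivValue_apply hinj r), hD⟩

theorem exists_derivation_extensions_agree
    (hR : ∀ r s x : R, op (r ⊗ₜ[ℤ] op s) • x = s * x * r) (hδ : IsDerivation δ)
    (hfaith : symTorsion Fl Fr R = {0}) (hq : IsSymRingOfQuotients Fl Fr q)
    {Fl' : GabrielFilter R} {Fr' : GabrielFilter Rᵐᵒᵖ} {Q' : Type*} [Ring Q']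
    [Module (Env R)ᵐᵒᵖ Q'] {q' : R →ₗ[(Env R)ᵐᵒᵖ] Q'}
    (hfaith' : symTorsion Fl' Fr' R = {0}) (hq' : IsSymRingOfQuotients Fl' Fr' q')
    {f : Q →ₗ[(Env R)ᵐᵒᵖ] Q'} (hf : ∀ r, f (q r) = q' r) :
    ∃ (δ₁ : Q → Q) (δ₂ : Q' → Q'), IsDerivation δ₁ ∧ IsDerivation δ₂ ∧
      (∀ r, δ₁ (q r) = q (δ r)) ∧ (∀ r, δ₂ (q' r) = q' (δ r)) ∧
      ∀ y, δ₂ (f y) = f (δ₁ y) := by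
  obtain ⟨D₁, hD₁, hD₁q, hD₁val⟩ := hq.exists_derivation_extension hR hδ hfaith
  obtain ⟨D₂, hD₂, hD₂q, hD₂val⟩ := hq'.exists_derivation_extension hR hδ hfaith'
  have hinj : Function.Injective f := hq.quotients.injective_of_injective_comp <| by
    rwa [show ⇑f ∘ ⇑q = ⇑q' from funext hf, hq'.quotients.injective_iff]
  exact ⟨D₁, D₂, hD₁, hD₂, hD₁q, hD₂q,
    fun y => (hD₂val _).eq hq'.quotients ((hD₁val y).map hinj hf)⟩

end RingOfQuotients

theorem extension_to_symQmax_agrees_general {R : Type u} [Ring R] [Module (Env R)ᵐᵒᵖ R]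
    (hR : ∀ r s x : R, op (r ⊗ₜ[ℤ] op s) • x = s * x * r)
    (δ : R → R) (hδ : IsDerivation δ)
    (Dl : GabrielFilter R) (Dr : GabrielFilter Rᵐᵒᵖ)
    (hDl : Dl.sets = {I : Ideal R | IsDenseLeftIdeal I})
    {QM : Type u} [Ring QM] [Module (Env R)ᵐᵒᵖ QM] (qM : R →ₗ[(Env R)ᵐᵒᵖ] QM)
    (hqM : IsSymRingOfQuotients Dl Dr qM) :
    (∀ (Fl : GabrielFilter R) (Fr : GabrielFilter Rᵐᵒᵖ), symTorsion Fl Fr R = {0} →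
      ∀ {Q : Type u} [Ring Q] [Module (Env R)ᵐᵒᵖ Q] (q : R →ₗ[(Env R)ᵐᵒᵖ] Q),
        IsSymRingOfQuotients Fl Fr q →
        ∀ q₁₂ : Q →ₗ[(Env R)ᵐᵒᵖ] QM, (∀ r : R, q₁₂ (q r) = qM r) →
          ∃ (δ₁ : Q → Q) (δ₂ : QM → QM), IsDerivation δ₁ ∧ IsDerivation δ₂ ∧
            (∀ r : R, δ₁ (q r) = q (δ r)) ∧ (∀ r : R, δ₂ (qM r) = qM (δ r)) ∧
            (∀ y : Q, δ₂ (q₁₂ y) = q₁₂ (δ₁ y))) ∧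
    (∀ (Flt : GabrielFilter R) (Frt : GabrielFilter Rᵐᵒᵖ), IsPerfectSymFilter R Flt Frt →
      (∀ (Fl' : GabrielFilter R) (Fr' : GabrielFilter Rᵐᵒᵖ), IsPerfectSymFilter R Fl' Fr' →
        symSets Fl' Fr' ⊆ symSets Flt Frt) →
      ∀ {Qt : Type u} [Ring Qt] [Module (Env R)ᵐᵒᵖ Qt] (qt : R →ₗ[(Env R)ᵐᵒᵖ] Qt),
        IsSymRingOfQuotients Flt Frt qt →
        ∀ q₁₂ : Qt →ₗ[(Env R)ᵐᵒᵖ] QM, (∀ r : R, q₁₂ (qt r) = qM r) →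
          ∃ (δ₁ : Qt → Qt) (δ₂ : QM → QM), IsDerivation δ₁ ∧ IsDerivation δ₂ ∧
            (∀ r : R, δ₁ (qt r) = qt (δ r)) ∧ (∀ r : R, δ₂ (qM r) = qM (δ r)) ∧
            (∀ y : Qt, δ₂ (q₁₂ y) = q₁₂ (δ₁ y))) := by
  have hfaithM : symTorsion Dl Dr R = {0} :=
    symTorsion_self_eq_zero hR fun I hI => by rwa [hDl] at hI
  refine ⟨fun Fl Fr hfaith Q _ _ q hq q₁₂ h12 =>
    exists_derivation_extensions_agree hR hδ hfaith hq hfaithM hqM h12, ?_⟩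
  intro Flt Frt _ _ Qt _ _ qt hqt q₁₂ h12
  have hinjt : Function.Injective qt :=
    Function.Injective.of_comp (f := q₁₂) <| by
      rwa [show ⇑q₁₂ ∘ ⇑qt = ⇑qM from funext h12, hqM.quotients.injective_iff]
  exact exists_derivation_extensions_agree hR hδ (hqt.quotients.injective_iff.1 hinjt) hqt
    hfaithM hqM h12

/-- Let `δ` be a derivation on `R` and let `Q^σ_max(R)` be the maximal
symmetric ring of quotients, i.e. the symmetric ring of quotients for the symmetric
filter induced by the filters of dense left and dense right ideals.  The extension of `δ`
to the symmetric ring of quotients with respect to any hereditary and faithful symmetric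
torsion theory agrees with the extension of `δ` to `Q^σ_max(R)`.  In particular, the
extensions of `δ` to the total symmetric ring of quotients `Q^σ_tot(R)` (the largest
perfect symmetric ring of quotients) and to `Q^σ_max(R)` agree. -/
theorem extension_to_symQmax_agrees {R : Type u} [Ring R] [Module (Env R)ᵐᵒᵖ R]
    (hR : ∀ r s x : R, op (r ⊗ₜ[ℤ] op s) • x = s * x * r)
    (δ : R → R) (hδ : IsDerivation δ)
    (Dl : GabrielFilter R) (Dr : GabrielFilter Rᵐᵒᵖ)
    (hDl : Dl.sets = {I : Ideal R | IsDenseLeftIdeal I})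
    (hDr : Dr.sets = {J : Ideal Rᵐᵒᵖ | IsDenseRightIdeal J})
    {QM : Type u} [Ring QM] [Module (Env R)ᵐᵒᵖ QM] (qM : R →ₗ[(Env R)ᵐᵒᵖ] QM)
    (hqM : IsSymRingOfQuotients Dl Dr qM) :
    (∀ (Fl : GabrielFilter R) (Fr : GabrielFilter Rᵐᵒᵖ), symTorsion Fl Fr R = {0} →
      ∀ {Q : Type u} [Ring Q] [Module (Env R)ᵐᵒᵖ Q] (q : R →ₗ[(Env R)ᵐᵒᵖ] Q),
        IsSymRingOfQuotients Fl Fr q →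
        ∀ q₁₂ : Q →ₗ[(Env R)ᵐᵒᵖ] QM, (∀ r : R, q₁₂ (q r) = qM r) →
          ∃ (δ₁ : Q → Q) (δ₂ : QM → QM), IsDerivation δ₁ ∧ IsDerivation δ₂ ∧
            (∀ r : R, δ₁ (q r) = q (δ r)) ∧ (∀ r : R, δ₂ (qM r) = qM (δ r)) ∧
            (∀ y : Q, δ₂ (q₁₂ y) = q₁₂ (δ₁ y))) ∧
    (∀ (Flt : GabrielFilter R) (Frt : GabrielFilter Rᵐᵒᵖ), IsPerfectSymFilter R Flt Frt →
      (∀ (Fl' : GabrielFilter R) (Fr' : GabrielFilter Rᵐᵒᵖ), IsPerfectSymFilter R Fl' Fr' →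
        symSets Fl' Fr' ⊆ symSets Flt Frt) →
      ∀ {Qt : Type u} [Ring Qt] [Module (Env R)ᵐᵒᵖ Qt] (qt : R →ₗ[(Env R)ᵐᵒᵖ] Qt),
        IsSymRingOfQuotients Flt Frt qt →
        ∀ q₁₂ : Qt →ₗ[(Env R)ᵐᵒᵖ] QM, (∀ r : R, q₁₂ (qt r) = qM r) →
          ∃ (δ₁ : Qt → Qt) (δ₂ : QM → QM), IsDerivation δ₁ ∧ IsDerivation δ₂ ∧
            (∀ r : R, δ₁ (qt r) = qt (δ r)) ∧ (∀ r : R, δ₂ (qM r) = qM (δ r)) ∧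
            (∀ y : Qt, δ₂ (q₁₂ y) = q₁₂ (δ₁ y))) :=
  extension_to_symQmax_agrees_general hR δ hδ Dl Dr hDl qM hqM
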